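/- Let R be a right ACS ring. Then for any elements x₁, …, xₙ of R there exists an idempotent e ∈ R such that the right annihilator r_R(x₁,…,xₙ) = {r ∈ R : xᵢr = 0 for all i} is essential in eR. -/

import Mathlib

namespace CSRickartPaper

section Defs

variable {R : Type*} [Ring R] {M : Type*} [AddCommGroup M] [Module R M]

/-- `N` is an essential submodule of `P` (inside the ambient module `M`):
`N ≤ P` and every submodule of `P` intersecting `N` trivially is zero. -/
def EssentialIn (N P : Submodule R M) : Prop :=
  N ≤ P ∧ ∀ K : Submodule R M, K ≤ P → N ⊓ K = ⊥ → K = ⊥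

/-- `N` is a small (superfluous) submodule of `P`. -/
def SmallIn (N P : Submodule R M) : Prop :=
  N ≤ P ∧ ∀ K : Submodule R M, K ≤ P → N ⊔ K = P → K = P

/-- `N` is a direct summand of `M`. -/
def IsDirectSummand (N : Submodule R M) : Prop :=
  ∃ K : Submodule R M, IsCompl N K

/-- `N` lies above the direct summand `D` of `M`: `M = D ⊕ K`, `D ≤ N` and
`N ⊓ K` is small in `K`. -/
def LiesAbove (N D : Submodule R M) : Prop :=
  ∃ K : Submodule R M, IsCompl D K ∧ D ≤ N ∧ SmallIn (N ⊓ K) K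

/-- `N` lies above a direct summand of `M`. -/
def LiesAboveSummand (N : Submodule R M) : Prop :=
  ∃ D : Submodule R M, LiesAbove N D

end Defs

section ModuleDefs

variable (R : Type*) [Ring R] (M : Type*) [AddCommGroup M] [Module R M]

/-- `M` is a CS-Rickart module: the kernel of every endomorphism is essential
in a direct summand `eM`, `e` an idempotent endomorphism. -/
def IsCSRickart : Prop :=
  ∀ φ : Module.End R M, ∃ e : Module.End R M, IsIdempotentElem e ∧
    EssentialIn (LinearMap.ker φ) (LinearMap.range e)

/-- `M` is a d-CS-Rickart module: the image of every endomorphism lies above a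
direct summand of `M`. -/
def IsDCSRickart : Prop :=
  ∀ φ : Module.End R M, LiesAboveSummand (LinearMap.range φ)

/-- `M` is a Rickart module. -/
def IsRickart : Prop :=
  ∀ φ : Module.End R M, ∃ e : Module.End R M, IsIdempotentElem e ∧
    LinearMap.ker φ = LinearMap.range e

/-- `M` is a dual Rickart module. -/
def IsDRickart : Prop :=
  ∀ φ : Module.End R M, ∃ e : Module.End R M, IsIdempotentElem e ∧
    LinearMap.range φ = LinearMap.range e

/-- `M` is a CS (extending) module. -/
def IsCSModule : Prop :=
  ∀ N : Submodule R M, ∃ D : Submodule R M, IsDirectSummand D ∧ EssentialIn N D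

/-- `M` is a lifting (d-CS) module. -/
def IsLifting : Prop :=
  ∀ N : Submodule R M, LiesAboveSummand N

/-- `M` is a singular module: the annihilator of every element is an essential
ideal of `R`. -/
def IsSingularModule : Prop :=
  ∀ m : M, EssentialIn (LinearMap.ker (LinearMap.toSpanSingleton R M m)) (⊤ : Submodule R R)

/-- `M` is uniform: every nonzero submodule is essential. -/
def IsUniformModule : Prop :=
  ∀ N : Submodule R M, N ≠ ⊥ → EssentialIn N (⊤ : Submodule R M)

/-- `M` satisfies the C₂ condition: every submodule isomorphic to a direct
summand is itself a direct summand. -/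
def IsC2 : Prop :=
  ∀ N D : Submodule R M, IsDirectSummand D → Nonempty (N ≃ₗ[R] D) → IsDirectSummand N

/-- `M` is K-nonsingular. -/
def IsKNonsingular : Prop :=
  ∀ φ : Module.End R M, ∀ N : Submodule R M, EssentialIn N (⊤ : Submodule R M) →
    N ≤ LinearMap.ker φ → φ = 0

/-- `M` is T-noncosingular. -/
def IsTNoncosingular : Prop :=
  ∀ φ : Module.End R M, φ ≠ 0 → ¬ SmallIn (LinearMap.range φ) (⊤ : Submodule R M)

/-- `M` is an SIP-CS module. -/
def IsSIPCS : Prop :=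
  ∀ A B : Submodule R M, IsDirectSummand A → IsDirectSummand B →
    ∃ D : Submodule R M, IsDirectSummand D ∧ EssentialIn (A ⊓ B) D

/-- `M` is an SSP-d-CS module. -/
def IsSSPdCS : Prop :=
  ∀ A B : Submodule R M, IsDirectSummand A → IsDirectSummand B →
    LiesAboveSummand (A ⊔ B)

end ModuleDefs

section RelDefs

variable (R : Type*) [Ring R] (M N : Type*) [AddCommGroup M] [Module R M]
  [AddCommGroup N] [Module R N]

/-- `M` is relatively CS-Rickart to `N`. -/
def IsRelCSRickart : Prop :=
  ∀ φ : M →ₗ[R] N, ∃ e : Module.End R M, IsIdempotentElem e ∧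
    EssentialIn (LinearMap.ker φ) (LinearMap.range e)

/-- `M` is relatively d-CS-Rickart to `N`. -/
def IsRelDCSRickart : Prop :=
  ∀ φ : M →ₗ[R] N, LiesAboveSummand (LinearMap.range φ)

/-- `N` is `M`-injective. -/
def IsRelInjective : Prop :=
  ∀ (A : Submodule R M) (f : A →ₗ[R] N), ∃ g : M →ₗ[R] N, ∀ a : A, g a = f a

end RelDefs

section RingDefs

variable (R : Type*) [Ring R]

/-- The annihilator of an element `a` of `R`, as an ideal (kernel of `r ↦ r • a`). -/
def annElem (a : R) : Submodule R R :=
  LinearMap.ker (LinearMap.toSpanSingleton R R a)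

/-- The annihilator of a subset `X` of `R`. -/
def annSet (X : Set R) : Submodule R R :=
  ⨅ x ∈ X, annElem R x

/-- The principal ideal generated by `e`, i.e. the image of `r ↦ r • e`. -/
def idealGen (e : R) : Submodule R R :=
  LinearMap.range (LinearMap.toSpanSingleton R R e)

/-- `R` is an ACS ring: the annihilator of every element is essential in a
direct summand `eR` of `R`. -/
def IsACSRing : Prop :=
  ∀ a : R, ∃ e : R, IsIdempotentElem e ∧ EssentialIn (annElem R a) (idealGen R e)

/-- `R` is an essentially Baer ring. -/
def IsEssentiallyBaer : Prop :=
  ∀ X : Set R, X.Nonempty → ∃ e : R, IsIdempotentElem e ∧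
    EssentialIn (annSet R X) (idealGen R e)

/-- The Jacobson radical of the ring `R`. -/
noncomputable def jacRad : Ideal R := Ideal.jacobson (⊥ : Ideal R)

/-- `R` is semiregular: `R/J(R)` is von Neumann regular and idempotents lift
modulo `J(R)` (stated elementwise). -/
def IsSemiregularRing : Prop :=
  (∀ a : R, ∃ b : R, a - a * b * a ∈ jacRad R) ∧
  (∀ a : R, a - a * a ∈ jacRad R →
    ∃ e : R, IsIdempotentElem e ∧ e - a ∈ jacRad R)

/-- `J(R)` coincides with the singular ideal `Z(R)`. -/
def JacEqSingular : Prop :=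
  ∀ a : R, a ∈ jacRad R ↔ EssentialIn (annElem R a) (⊤ : Submodule R R)

end RingDefs

section GenDefs

variable {R : Type*} [Ring R] {M : Type*} [AddCommGroup M] [Module R M]

/-- A submodule is `n`-generated if it is spanned by at most `n` elements. -/
def NGen (n : ℕ) (N : Submodule R M) : Prop :=
  ∃ f : Fin n → M, Submodule.span R (Set.range f) = N

end GenDefs

end CSRickartPaper

/-!
Left annihilators `l(·)` and left ideals `Re` play the roles of the paper's right ones.
Induct on the number of elements. If `A = l(x₀, …, xₙ₋₁)` is essential in `Re` and
`B = l(e xₙ)` is essential in `Rg`, then `A ⊓ B = l(x₀, …, xₙ)`, because elements of `A`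
are fixed by right multiplication by `e`; and an intersection of essential submodules is
essential in the intersection. Since `1 - e ∈ B ≤ Rg` we get `geg = ge`, which makes `ge`
an idempotent with `R(ge) = Re ⊓ Rg`.
-/

namespace CSRickartPaper

theorem iInf_fin_succ_eq_iInf_castSucc_inf_last {α : Type*} [CompleteLattice α] {n : ℕ}
    (f : Fin (n + 1) → α) : ⨅ i, f i = (⨅ i : Fin n, f i.castSucc) ⊓ f (Fin.last n) :=
  le_antisymm (le_inf (le_iInf fun i => iInf_le f i.castSucc) (iInf_le f _))
    (le_iInf fun i => Fin.lastCases inf_le_right (fun j => inf_le_left.trans (iInf_le _ j)) i)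

section EssentialIn

variable {R : Type*} [Ring R] {M : Type*} [AddCommGroup M] [Module R M]

theorem essentialIn_refl (N : Submodule R M) : EssentialIn N N :=
  ⟨le_rfl, fun _ hK hNK => by rwa [inf_eq_right.mpr hK] at hNK⟩

theorem EssentialIn.inf {N₁ P₁ N₂ P₂ : Submodule R M} (h₁ : EssentialIn N₁ P₁)
    (h₂ : EssentialIn N₂ P₂) : EssentialIn (N₁ ⊓ N₂) (P₁ ⊓ P₂) := by
  refine ⟨inf_le_inf h₁.1 h₂.1, fun K hK hNK => h₁.2 K (hK.trans inf_le_left) ?_⟩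
  refine h₂.2 (N₁ ⊓ K) (inf_le_right.trans (hK.trans inf_le_right)) ?_
  rwa [inf_left_comm, ← inf_assoc]

end EssentialIn

section Ring

variable {R : Type*} [Ring R]

theorem mem_annElem {a r : R} : r ∈ annElem R a ↔ r * a = 0 := by
  simp [annElem]

theorem mem_idealGen_iff_mul_eq {e r : R} (he : IsIdempotentElem e) :
    r ∈ idealGen R e ↔ r * e = r := by
  simp only [idealGen, LinearMap.mem_range, LinearMap.toSpanSingleton_apply, smul_eq_mul]
  refine ⟨?_, fun h => ⟨r, h⟩⟩
  rintro ⟨s, rfl⟩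
  rw [mul_assoc, he.eq]

theorem idealGen_one : idealGen R (1 : R) = ⊤ :=
  eq_top_iff.mpr fun r _ => (mem_idealGen_iff_mul_eq IsIdempotentElem.one).mpr (mul_one r)

theorem _root_.IsIdempotentElem.mul_of_mul_mul_eq {e g : R} (he : IsIdempotentElem e)
    (hgeg : g * e * g = g * e) : IsIdempotentElem (g * e) := by
  rw [IsIdempotentElem, ← mul_assoc, hgeg, mul_assoc, he.eq]

theorem idealGen_mul_eq_inf {e g : R} (he : IsIdempotentElem e) (hg : IsIdempotentElem g)
    (hgeg : g * e * g = g * e) : idealGen R (g * e) = idealGen R e ⊓ idealGen R g := by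
  ext r
  rw [Submodule.mem_inf, mem_idealGen_iff_mul_eq (he.mul_of_mul_mul_eq hgeg),
    mem_idealGen_iff_mul_eq he, mem_idealGen_iff_mul_eq hg]
  constructor
  · intro h
    refine ⟨?_, ?_⟩
    · rw [← h, mul_assoc, mul_assoc, he.eq]
    · rw [← h, mul_assoc, hgeg]
  · rintro ⟨hre, hrg⟩
    rw [← mul_assoc, hrg, hre]

theorem inf_annElem_mul_of_le_idealGen {e : R} (he : IsIdempotentElem e) {A : Submodule R R}
    (hA : A ≤ idealGen R e) (b : R) : A ⊓ annElem R (e * b) = A ⊓ annElem R b := by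
  ext r
  simp only [Submodule.mem_inf, mem_annElem, and_congr_right_iff]
  intro hr
  rw [← mul_assoc, (mem_idealGen_iff_mul_eq he).mp (hA hr)]

theorem IsACSRing.exists_essentialIn_inf_annElem (h : IsACSRing R) {e : R}
    (he : IsIdempotentElem e) {A : Submodule R R} (hA : EssentialIn A (idealGen R e)) (b : R) :
    ∃ d : R, IsIdempotentElem d ∧ EssentialIn (A ⊓ annElem R b) (idealGen R d) := by
  obtain ⟨g, hg, hB⟩ := h (e * b)
  have h_one_sub : (1 - e) * g = 1 - e := by
    refine (mem_idealGen_iff_mul_eq hg).mp (hB.1 (mem_annElem.mpr ?_))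
    rw [← mul_assoc, sub_mul, one_mul, he.eq, sub_self, zero_mul]
  have hgeg : g * e * g = g * e :=
    calc g * e * g = g * g - g * ((1 - e) * g) := by noncomm_ring
      _ = g * e := by rw [h_one_sub, hg.eq]; noncomm_ring
  refine ⟨g * e, he.mul_of_mul_mul_eq hgeg, ?_⟩
  rw [idealGen_mul_eq_inf he hg hgeg, ← inf_annElem_mul_of_le_idealGen he hA.1]
  exact hA.inf hB

end Ring

/-- In a right ACS ring, the annihilator of finitely many elements is essential
in a direct summand `eR` generated by an idempotent. -/
theorem acs_ann_of_finitely_many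
    {R : Type*} [Ring R] (h : IsACSRing R) (n : ℕ) (x : Fin n → R) :
    ∃ e : R, IsIdempotentElem e ∧
      EssentialIn (⨅ i, annElem R (x i)) (idealGen R e) := by
  induction n with
  | zero =>
    refine ⟨1, IsIdempotentElem.one, ?_⟩
    rw [iInf_of_empty, idealGen_one]
    exact essentialIn_refl ⊤
  | succ n ih =>
    obtain ⟨e, he, hA⟩ := ih (fun i => x i.castSucc)
    rw [iInf_fin_succ_eq_iInf_castSucc_inf_last]
    exact h.exists_essentialIn_inf_annElem he hA (x (Fin.last n))

end CSRickartPaper
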